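/- Let β_i be a given smooth vector field on ℝ × ℝ³, and let A_ij (symmetric-matrix-valued) and κ (scalar) be smooth fields on ℝ × ℝ³ satisfying the wave equations ∂_t∂_t A_ij = ΔA_ij and ∂_t∂_t κ = Δκ everywhere. Let γ̃⁰_ij, Γ⁰_i, α⁰, φ⁰ be smooth fields on ℝ³ and assume the initial time-derivatives satisfy, for all x ∈ ℝ³: ∂_t A_ij(0,x) = −(1/2)Δγ̃⁰_ij + (1/2)(∂_i Γ⁰_j + ∂_j Γ⁰_i) − 2∂_i∂_j φ⁰ − 2δ_ij Δφ⁰ − ∂_i∂_j α⁰ + (1/3)δ_ij Δα⁰, and ∂_t κ(0,x) = −Δα⁰(x). Define φ(t,x) = φ⁰(x) + ∫₀ᵗ [−(1/6)κ + (1/6)∂_l β_l](s,x) ds; α(t,x) = α⁰(x) − ∫₀ᵗ κ(s,x) ds; γ̃_ij(t,x) = γ̃⁰_ij(x) + ∫₀ᵗ [−2A_ij + ∂_i β_j + ∂_j β_i − (2/3)δ_ij ∂_l β_l](s,x) ds; Γ_i(t,x) = Γ⁰_i(x) + ∫₀ᵗ [−(4/3)∂_i κ + (1/3)∂_i(∂_p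 β_p) + Δβ_i](s,x) ds. Then the fields (φ, α, κ, γ̃_ij, A_ij, Γ_i) satisfy the full linearized BSSN system (E1)–(E6) at every point of ℝ × ℝ³. -/

import Mathlib

noncomputable section

/-- Spacetime ℝ × ℝ³. -/
abbrev Spc : Type := ℝ × (Fin 3 → ℝ)

/-- Time derivative ∂_t. -/
noncomputable def pt (f : Spc → ℝ) : Spc → ℝ :=
  fun p => deriv (fun s => f (s, p.2)) p.1

/-- Spatial partial derivative ∂_i. -/
noncomputable def ps (i : Fin 3) (f : Spc → ℝ) : Spc → ℝ :=
  fun p => deriv (fun s => f (p.1, Function.update p.2 i s)) (p.2 i)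

/-- Spatial Laplacian Δ = Σ_i ∂_i ∂_i. -/
noncomputable def lap (f : Spc → ℝ) : Spc → ℝ :=
  fun p => ∑ i : Fin 3, ps i (ps i f) p

/-- Kronecker delta δ_ij. -/
noncomputable def kron (i j : Fin 3) : ℝ := if i = j then 1 else 0

/-- Spatial partial derivative ∂_i on ℝ³ (for initial-data fields). -/
noncomputable def d (i : Fin 3) (f : (Fin 3 → ℝ) → ℝ) : (Fin 3 → ℝ) → ℝ :=
  fun x => deriv (fun s => f (Function.update x i s)) (x i)

/-- Spatial Laplacian on ℝ³ (for initial-data fields). -/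
noncomputable def lapS (f : (Fin 3 → ℝ) → ℝ) : (Fin 3 → ℝ) → ℝ :=
  fun x => ∑ i : Fin 3, d i (d i f) x

/-! (E1), (E2), (E4) and (E6) are the fundamental theorem of calculus. For (E3) and (E5) both
sides agree at `t = 0` by the assumptions on the initial time derivatives, and they have the same
time derivative. Indeed, differentiating under the integral sign, the time derivative of the
right-hand side of (E5) is that right-hand side evaluated on the integrands, that is on the
right-hand sides of (E1), (E2), (E4), (E6); once spatial derivatives are commuted everything but
`Δ A_ij` cancels, and `Δ A_ij = ∂_t ∂_t A_ij` by the wave equation. In the same way `-Δα` has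
time derivative `Δκ = ∂_t ∂_t κ`. -/

open scoped ContDiff
open Function

section PartialDerivatives

variable {f g : Spc → ℝ} {c : (Fin 3 → ℝ) → ℝ}

theorem hasDerivAt_pt (hf : Differentiable ℝ f) (p : Spc) :
    HasDerivAt (fun s => f (s, p.2)) (pt f p) p.1 :=
  ((hf _).hasFDerivAt.comp_hasDerivAt p.1
    ((hasDerivAt_id p.1).prodMk (hasDerivAt_const p.1 p.2)) |>.differentiableAt).hasDerivAt

theorem hasDerivAt_ps (hf : Differentiable ℝ f) (p : Spc) (i : Fin 3) :
    HasDerivAt (fun s => f (p.1, update p.2 i s)) (ps i f p) (p.2 i) :=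
  ((hf _).hasFDerivAt.comp_hasDerivAt (p.2 i)
    ((hasDerivAt_const _ p.1).prodMk (hasDerivAt_update p.2 i _))
    |>.differentiableAt).hasDerivAt

theorem hasDerivAt_d (hc : Differentiable ℝ c) (x : Fin 3 → ℝ) (i : Fin 3) :
    HasDerivAt (fun s => c (update x i s)) (d i c x) (x i) :=
  ((hc _).hasFDerivAt.comp_hasDerivAt (x i) (hasDerivAt_update x i _)
    |>.differentiableAt).hasDerivAt

theorem pt_eq_fderiv (hf : Differentiable ℝ f) : pt f = fun p => fderiv ℝ f p (1, 0) := by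
  funext p
  have h := (hf p).hasFDerivAt.comp_hasDerivAt p.1
    ((hasDerivAt_id p.1).prodMk (hasDerivAt_const p.1 p.2))
  exact h.deriv

theorem ps_eq_fderiv (hf : Differentiable ℝ f) (i : Fin 3) :
    ps i f = fun p => fderiv ℝ f p (0, Pi.single i 1) := by
  funext p
  have h := (hf _).hasFDerivAt.comp_hasDerivAt (p.2 i)
    ((hasDerivAt_const (p.2 i) p.1).prodMk (hasDerivAt_update p.2 i (p.2 i)))
  rw [update_eq_self] at h
  exact h.deriv

theorem d_eq_fderiv (hc : Differentiable ℝ c) (i : Fin 3) :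
    d i c = fun x => fderiv ℝ c x (Pi.single i 1) := by
  funext x
  have h := (hc _).hasFDerivAt.comp_hasDerivAt (x i) (hasDerivAt_update x i (x i))
  rw [update_eq_self] at h
  exact h.deriv

@[fun_prop]
theorem contDiff_pt (hf : ContDiff ℝ ∞ f) : ContDiff ℝ ∞ (pt f) := by
  obtain ⟨hdiff, hderiv⟩ := contDiff_infty_iff_fderiv.1 hf
  rw [pt_eq_fderiv hdiff]
  exact hderiv.clm_apply contDiff_const

@[fun_prop]
theorem contDiff_ps (hf : ContDiff ℝ ∞ f) (i : Fin 3) : ContDiff ℝ ∞ (ps i f) := by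
  obtain ⟨hdiff, hderiv⟩ := contDiff_infty_iff_fderiv.1 hf
  rw [ps_eq_fderiv hdiff]
  exact hderiv.clm_apply contDiff_const

@[fun_prop]
theorem contDiff_d (hc : ContDiff ℝ ∞ c) (i : Fin 3) : ContDiff ℝ ∞ (d i c) := by
  obtain ⟨hdiff, hderiv⟩ := contDiff_infty_iff_fderiv.1 hc
  rw [d_eq_fderiv hdiff]
  exact hderiv.clm_apply contDiff_const

@[fun_prop]
theorem contDiff_lap (hf : ContDiff ℝ ∞ f) : ContDiff ℝ ∞ (lap f) :=
  ContDiff.sum fun i _ => contDiff_ps (contDiff_ps hf i) i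

theorem ps_add (hf : Differentiable ℝ f) (hg : Differentiable ℝ g) (i : Fin 3) :
    ps i (fun q => f q + g q) = fun q => ps i f q + ps i g q :=
  funext fun p => ((hasDerivAt_ps hf p i).add (hasDerivAt_ps hg p i)).deriv

theorem ps_sub (hf : Differentiable ℝ f) (hg : Differentiable ℝ g) (i : Fin 3) :
    ps i (fun q => f q - g q) = fun q => ps i f q - ps i g q :=
  funext fun p => ((hasDerivAt_ps hf p i).sub (hasDerivAt_ps hg p i)).deriv

theorem ps_const_mul (a : ℝ) (hf : Differentiable ℝ f) (i : Fin 3) :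
    ps i (fun q => a * f q) = fun q => a * ps i f q :=
  funext fun p => ((hasDerivAt_ps hf p i).const_mul a).deriv

theorem ps_neg (hf : Differentiable ℝ f) (i : Fin 3) :
    ps i (fun q => -f q) = fun q => -ps i f q :=
  funext fun p => (hasDerivAt_ps hf p i).neg.deriv

theorem ps_sum {ι : Type*} (s : Finset ι) {F : ι → Spc → ℝ} (hF : ∀ l, Differentiable ℝ (F l))
    (i : Fin 3) : ps i (fun q => ∑ l ∈ s, F l q) = fun q => ∑ l ∈ s, ps i (F l) q :=
  funext fun p => (HasDerivAt.fun_sum fun l _ => hasDerivAt_ps (hF l) p i).deriv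

theorem lap_add (hf : ContDiff ℝ ∞ f) (hg : ContDiff ℝ ∞ g) :
    lap (fun q => f q + g q) = fun q => lap f q + lap g q := by
  funext p
  simp (disch := fun_prop (disch := simp)) only [lap, ps_add, Finset.sum_add_distrib]

theorem lap_sub (hf : ContDiff ℝ ∞ f) (hg : ContDiff ℝ ∞ g) :
    lap (fun q => f q - g q) = fun q => lap f q - lap g q := by
  funext p
  simp (disch := fun_prop (disch := simp)) only [lap, ps_sub, Finset.sum_sub_distrib]

theorem lap_const_mul (a : ℝ) (hf : ContDiff ℝ ∞ f) :
    lap (fun q => a * f q) = fun q => a * lap f q := by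
  funext p
  simp (disch := fun_prop (disch := simp)) only [lap, ps_const_mul, Finset.mul_sum]

theorem lap_neg (hf : ContDiff ℝ ∞ f) : lap (fun q => -f q) = fun q => -lap f q := by
  funext p
  simp (disch := fun_prop (disch := simp)) only [lap, ps_neg, Finset.sum_neg_distrib]

theorem ps_comm (hf : ContDiff ℝ ∞ f) (i j : Fin 3) : ps i (ps j f) = ps j (ps i f) := by
  obtain ⟨hdiff, hderiv⟩ := contDiff_infty_iff_fderiv.1 hf
  have hsecond : ∀ a b : Fin 3, ps a (ps b f) =
      fun p => fderiv ℝ (fderiv ℝ f) p (0, Pi.single a 1) (0, Pi.single b 1) := by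
    intro a b
    rw [ps_eq_fderiv hdiff b,
      ps_eq_fderiv ((hderiv.clm_apply contDiff_const).differentiable (by simp)) a]
    funext p
    simp [fderiv_clm_apply ((hderiv.differentiable (by simp)) p) (differentiableAt_const _)]
  rw [hsecond, hsecond]
  funext p
  exact hf.contDiffAt.isSymmSndFDerivAt (by simpa using ENat.LEInfty.out) _ _

theorem lap_ps (hf : ContDiff ℝ ∞ f) (i : Fin 3) : lap (ps i f) = ps i (lap f) := by
  have hcomm : ∀ a, ps a (ps a (ps i f)) = ps i (ps a (ps a f)) := fun a => by
    rw [ps_comm hf a i, ps_comm (contDiff_ps hf a) a i]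
  funext p
  show ∑ a, ps a (ps a (ps i f)) p = ps i (fun q => ∑ a, ps a (ps a f) q) p
  rw [ps_sum _ fun a => (contDiff_ps (contDiff_ps hf a) a).differentiable (by simp)]
  simp only [hcomm]

end PartialDerivatives

theorem hasDerivAt_intervalIntegral_of_continuous {F F' : ℝ → ℝ → ℝ}
    (hF : Continuous (uncurry F)) (hF' : Continuous (uncurry F'))
    (hderiv : ∀ u s, HasDerivAt (fun u => F u s) (F' u s) u) (a b u₀ : ℝ) :
    HasDerivAt (fun u => ∫ s in a..b, F u s) (∫ s in a..b, F' u₀ s) u₀ := by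
  obtain ⟨C, hC⟩ : ∃ C, ∀ z ∈ Metric.closedBall u₀ 1 ×ˢ Set.uIcc a b, ‖uncurry F' z‖ ≤ C :=
    ((isCompact_closedBall _ _).prod isCompact_uIcc).exists_bound_of_continuousOn
      hF'.continuousOn
  have hFu : ∀ u, Continuous (F u) := fun u => hF.comp (continuous_const.prodMk continuous_id)
  refine (intervalIntegral.hasDerivAt_integral_of_dominated_loc_of_deriv_le
    (bound := fun _ => C) (Metric.ball_mem_nhds u₀ one_pos)
    (.of_forall fun u => (hFu u).aestronglyMeasurable) ((hFu u₀).intervalIntegrable a b)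
    (hF'.comp (continuous_const.prodMk continuous_id)).aestronglyMeasurable
    (.of_forall fun s hs u hu =>
      hC (u, s) ⟨Metric.ball_subset_closedBall hu, Set.uIoc_subset_uIcc hs⟩)
    intervalIntegrable_const (.of_forall fun s _ u _ => hderiv u s)).2

def timeIntegral (c : (Fin 3 → ℝ) → ℝ) (f : Spc → ℝ) : Spc → ℝ :=
  fun p => c p.2 + ∫ s in (0 : ℝ)..p.1, f (s, p.2)

section TimeIntegral

variable {f : Spc → ℝ} {c : (Fin 3 → ℝ) → ℝ}

@[simp]
theorem timeIntegral_apply_zero (c : (Fin 3 → ℝ) → ℝ) (f : Spc → ℝ) (x : Fin 3 → ℝ) :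
    timeIntegral c f (0, x) = c x := by
  simp [timeIntegral]

theorem hasDerivAt_timeIntegral (c : (Fin 3 → ℝ) → ℝ) (hf : Continuous f) (p : Spc) :
    HasDerivAt (fun t => timeIntegral c f (t, p.2)) (f p) p.1 :=
  ((hf.comp (continuous_id.prodMk continuous_const)).integral_hasStrictDerivAt 0 p.1
    |>.hasDerivAt).const_add (c p.2)

theorem pt_timeIntegral (c : (Fin 3 → ℝ) → ℝ) (hf : Continuous f) :
    pt (timeIntegral c f) = f :=
  funext fun p => (hasDerivAt_timeIntegral c hf p).deriv

theorem ps_timeIntegral (hc : Differentiable ℝ c) (hf : ContDiff ℝ ∞ f) (i : Fin 3) :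
    ps i (timeIntegral c f) = timeIntegral (d i c) (ps i f) := by
  funext p
  have hint := hasDerivAt_intervalIntegral_of_continuous
    (F := fun u s => f (s, update p.2 i u)) (F' := fun u s => ps i f (s, update p.2 i u))
    (by fun_prop) (by fun_prop) (fun u s => by
      simpa using hasDerivAt_ps (hf.differentiable (by simp)) (s, update p.2 i u) i)
    0 p.1 (p.2 i)
  rw [update_eq_self] at hint
  exact ((hasDerivAt_d hc p.2 i).add hint).deriv

theorem lap_timeIntegral (hc : ContDiff ℝ ∞ c) (hf : ContDiff ℝ ∞ f) :
    lap (timeIntegral c f) = timeIntegral (lapS c) (lap f) := by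
  funext p
  simp (disch := fun_prop (disch := simp)) only [lap, ps_timeIntegral]
  simp only [timeIntegral, lapS, Finset.sum_add_distrib]
  rw [← intervalIntegral.integral_finsetSum fun a _ =>
    Continuous.intervalIntegrable (by fun_prop) _ _]
  rfl

end TimeIntegral

theorem pt_eq_of_wave {F G : Spc → ℝ} (hF : Differentiable ℝ (pt F))
    (hwave : ∀ p, pt (pt F) p = lap F p)
    (hG : ∀ p, HasDerivAt (fun t => G (t, p.2)) (lap F p) p.1)
    (h0 : ∀ x, pt F (0, x) = G (0, x)) :
    pt F = G := by
  funext ⟨t, x⟩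
  have hdiff : ∀ s, HasDerivAt (fun s => pt F (s, x) - G (s, x)) 0 s := fun s => by
    have h := (hasDerivAt_pt hF (s, x)).sub (hG (s, x))
    rwa [hwave, sub_self] at h
  have hconst := is_const_of_deriv_eq_zero (fun s => (hdiff s).differentiableAt)
    (fun s => (hdiff s).deriv) t 0
  simpa [h0, sub_eq_zero] using hconst

def rhsφ (κ : Spc → ℝ) (β : Fin 3 → Spc → ℝ) : Spc → ℝ :=
  fun q => -(1/6) * κ q + (1/6) * ∑ l, ps l (β l) q

def rhsγ (A : Fin 3 → Fin 3 → Spc → ℝ) (β : Fin 3 → Spc → ℝ) (i j : Fin 3) : Spc → ℝ :=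
  fun q => -2 * A i j q + ps i (β j) q + ps j (β i) q - (2/3) * kron i j * ∑ l, ps l (β l) q

def rhsΓ (κ : Spc → ℝ) (β : Fin 3 → Spc → ℝ) (i : Fin 3) : Spc → ℝ :=
  fun q => -(4/3) * ps i κ q + (1/3) * ps i (fun q => ∑ l, ps l (β l) q) q + lap (β i) q

def rhsA (γ : Fin 3 → Fin 3 → Spc → ℝ) (Γ : Fin 3 → Spc → ℝ) (φ α : Spc → ℝ) (i j : Fin 3) :
    Spc → ℝ :=
  fun p => -(1/2) * lap (γ i j) p + (1/2) * (ps i (Γ j) p + ps j (Γ i) p)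
    - 2 * ps i (ps j φ) p - 2 * kron i j * lap φ p
    - ps i (ps j α) p + (1/3) * kron i j * lap α p

theorem rhsA_rhs_eq_lap {A : Fin 3 → Fin 3 → Spc → ℝ} {β : Fin 3 → Spc → ℝ} {κ : Spc → ℝ}
    {i j : Fin 3} (hA : ContDiff ℝ ∞ (A i j)) (hβ : ∀ l, ContDiff ℝ ∞ (β l))
    (hκ : ContDiff ℝ ∞ κ) :
    rhsA (rhsγ A β) (rhsΓ κ β) (rhsφ κ β) (fun q => -κ q) i j = lap (A i j) := by
  funext p
  unfold rhsA rhsγ rhsΓ rhsφ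
  simp (disch := fun_prop (disch := simp)) only [ps_add, ps_const_mul, ps_neg,
    lap_add, lap_sub, lap_const_mul, lap_neg]
  rw [ps_comm hκ j i, ps_comm (by fun_prop : ContDiff ℝ ∞ fun q => ∑ l, ps l (β l) q) j i,
    lap_ps (hβ j) i, lap_ps (hβ i) j]
  ring

section TimeIntegratedFields

variable {γ0 : Fin 3 → Fin 3 → (Fin 3 → ℝ) → ℝ} {Γ0 : Fin 3 → (Fin 3 → ℝ) → ℝ}
  {φ0 α0 : (Fin 3 → ℝ) → ℝ} {g : Fin 3 → Fin 3 → Spc → ℝ} {G : Fin 3 → Spc → ℝ} {f a : Spc → ℝ}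

theorem rhsA_timeIntegral_apply_zero (hγ0 : ∀ i j, ContDiff ℝ ∞ (γ0 i j))
    (hΓ0 : ∀ i, ContDiff ℝ ∞ (Γ0 i)) (hφ0 : ContDiff ℝ ∞ φ0) (hα0 : ContDiff ℝ ∞ α0)
    (hg : ∀ i j, ContDiff ℝ ∞ (g i j)) (hG : ∀ i, ContDiff ℝ ∞ (G i)) (hf : ContDiff ℝ ∞ f)
    (ha : ContDiff ℝ ∞ a) (i j : Fin 3) (x : Fin 3 → ℝ) :
    rhsA (fun k l => timeIntegral (γ0 k l) (g k l)) (fun k => timeIntegral (Γ0 k) (G k))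
        (timeIntegral φ0 f) (timeIntegral α0 a) i j (0, x) =
      -(1/2) * lapS (γ0 i j) x + (1/2) * (d i (Γ0 j) x + d j (Γ0 i) x)
        - 2 * d i (d j φ0) x - 2 * kron i j * lapS φ0 x
        - d i (d j α0) x + (1/3) * kron i j * lapS α0 x := by
  unfold rhsA
  simp (disch := fun_prop (disch := simp)) only [ps_timeIntegral, lap_timeIntegral,
    timeIntegral_apply_zero]

theorem hasDerivAt_rhsA_timeIntegral (hγ0 : ∀ i j, ContDiff ℝ ∞ (γ0 i j))
    (hΓ0 : ∀ i, ContDiff ℝ ∞ (Γ0 i)) (hφ0 : ContDiff ℝ ∞ φ0) (hα0 : ContDiff ℝ ∞ α0)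
    (hg : ∀ i j, ContDiff ℝ ∞ (g i j)) (hG : ∀ i, ContDiff ℝ ∞ (G i)) (hf : ContDiff ℝ ∞ f)
    (ha : ContDiff ℝ ∞ a) (i j : Fin 3) (p : Spc) :
    HasDerivAt (fun t => rhsA (fun k l => timeIntegral (γ0 k l) (g k l))
        (fun k => timeIntegral (Γ0 k) (G k)) (timeIntegral φ0 f) (timeIntegral α0 a) i j (t, p.2))
      (rhsA g G f a i j p) p.1 := by
  unfold rhsA
  simp (disch := fun_prop (disch := simp)) only [ps_timeIntegral, lap_timeIntegral]
  have hderiv : ∀ {c : (Fin 3 → ℝ) → ℝ} {h : Spc → ℝ}, ContDiff ℝ ∞ h →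
      HasDerivAt (fun t => timeIntegral c h (t, p.2)) (h p) p.1 :=
    fun hh => hasDerivAt_timeIntegral _ hh.continuous p
  refine ((((((hderiv ?_).const_mul _).fun_add
    (((hderiv ?_).fun_add (hderiv ?_)).const_mul _)).fun_sub
    ((hderiv ?_).const_mul _)).fun_sub ((hderiv ?_).const_mul _)).fun_sub
    (hderiv ?_)).fun_add ((hderiv ?_).const_mul _)
  all_goals fun_prop

end TimeIntegratedFields

theorem integrated_solution_satisfies_BSSN_general
    (β : Fin 3 → Spc → ℝ) (A : Fin 3 → Fin 3 → Spc → ℝ) (κ : Spc → ℝ)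
    (hβ : ∀ i, ContDiff ℝ (⊤ : ℕ∞) (β i)) (hA : ∀ i j, ContDiff ℝ (⊤ : ℕ∞) (A i j))
    (hκ : ContDiff ℝ (⊤ : ℕ∞) κ)
    (waveA : ∀ i j p, pt (pt (A i j)) p = lap (A i j) p)
    (waveκ : ∀ p, pt (pt κ) p = lap κ p)
    (γ0 : Fin 3 → Fin 3 → (Fin 3 → ℝ) → ℝ) (Γ0 : Fin 3 → (Fin 3 → ℝ) → ℝ)
    (α0 φ0 : (Fin 3 → ℝ) → ℝ)
    (hγ0 : ∀ i j, ContDiff ℝ (⊤ : ℕ∞) (γ0 i j)) (hΓ0 : ∀ i, ContDiff ℝ (⊤ : ℕ∞) (Γ0 i))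
    (hα0 : ContDiff ℝ (⊤ : ℕ∞) α0) (hφ0 : ContDiff ℝ (⊤ : ℕ∞) φ0)
    (hinitA : ∀ i j, ∀ x : Fin 3 → ℝ, pt (A i j) (0, x) =
      -(1/2) * lapS (γ0 i j) x + (1/2) * (d i (Γ0 j) x + d j (Γ0 i) x)
        - 2 * d i (d j φ0) x - 2 * kron i j * lapS φ0 x
        - d i (d j α0) x + (1/3) * kron i j * lapS α0 x)
    (hinitκ : ∀ x : Fin 3 → ℝ, pt κ (0, x) = -(lapS α0 x))
    (φ α : Spc → ℝ) (γ : Fin 3 → Fin 3 → Spc → ℝ) (Γ : Fin 3 → Spc → ℝ)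
    (hφ : ∀ t : ℝ, ∀ x : Fin 3 → ℝ, φ (t, x) = φ0 x +
      ∫ s in (0:ℝ)..t, (-(1/6) * κ (s, x) + (1/6) * ∑ i, ps i (β i) (s, x)))
    (hα : ∀ t : ℝ, ∀ x : Fin 3 → ℝ, α (t, x) = α0 x - ∫ s in (0:ℝ)..t, κ (s, x))
    (hγ : ∀ i j, ∀ t : ℝ, ∀ x : Fin 3 → ℝ, γ i j (t, x) = γ0 i j x +
      ∫ s in (0:ℝ)..t, (-2 * A i j (s, x) + ps i (β j) (s, x) + ps j (β i) (s, x)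
        - (2/3) * kron i j * ∑ a, ps a (β a) (s, x)))
    (hΓ : ∀ i, ∀ t : ℝ, ∀ x : Fin 3 → ℝ, Γ i (t, x) = Γ0 i x +
      ∫ s in (0:ℝ)..t, (-(4/3) * ps i κ (s, x)
        + (1/3) * ps i (fun q => ∑ a, ps a (β a) q) (s, x) + lap (β i) (s, x))) :
    (∀ p, pt φ p = -(1/6) * κ p + (1/6) * ∑ l, ps l (β l) p) ∧
    (∀ p, pt α p = -κ p) ∧
    (∀ p, pt κ p = -(lap α p)) ∧
    (∀ i j p, pt (γ i j) p =
      -2 * A i j p + ps i (β j) p + ps j (β i) p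
        - (2/3) * kron i j * ∑ l, ps l (β l) p) ∧
    (∀ i j p, pt (A i j) p =
      -(1/2) * lap (γ i j) p + (1/2) * (ps i (Γ j) p + ps j (Γ i) p)
        - 2 * ps i (ps j φ) p - 2 * kron i j * lap φ p
        - ps i (ps j α) p + (1/3) * kron i j * lap α p) ∧
    (∀ i p, pt (Γ i) p =
      -(4/3) * ps i κ p + (1/3) * ps i (fun q => ∑ l, ps l (β l) q) p
        + lap (β i) p) := by
  have hφ' : ContDiff ℝ ∞ (rhsφ κ β) := by unfold rhsφ; fun_prop
  have hα' : ContDiff ℝ ∞ fun q => -κ q := by fun_prop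
  have hγ' : ∀ i j, ContDiff ℝ ∞ (rhsγ A β i j) := fun i j => by unfold rhsγ; fun_prop
  have hΓ' : ∀ i, ContDiff ℝ ∞ (rhsΓ κ β i) := fun i => by unfold rhsΓ; fun_prop
  obtain rfl : φ = timeIntegral φ0 (rhsφ κ β) := funext fun p => hφ p.1 p.2
  obtain rfl : α = timeIntegral α0 fun q => -κ q := funext fun p => by
    rw [timeIntegral, intervalIntegral.integral_neg, ← sub_eq_add_neg]
    exact hα p.1 p.2
  obtain rfl : γ = fun i j => timeIntegral (γ0 i j) (rhsγ A β i j) :=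
    funext fun i => funext fun j => funext fun p => hγ i j p.1 p.2
  obtain rfl : Γ = fun i => timeIntegral (Γ0 i) (rhsΓ κ β i) :=
    funext fun i => funext fun p => hΓ i p.1 p.2
  refine ⟨congrFun (pt_timeIntegral _ hφ'.continuous),
    congrFun (pt_timeIntegral _ hα'.continuous), ?_,
    fun i j => congrFun (pt_timeIntegral _ (hγ' i j).continuous), fun i j => ?_,
    fun i => congrFun (pt_timeIntegral _ (hΓ' i).continuous)⟩
  · refine congrFun (pt_eq_of_wave ((contDiff_pt hκ).differentiable (by simp)) waveκ
      (fun p => ?_) fun x => ?_)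
    · rw [lap_timeIntegral hα0 hα']
      simpa [lap_neg hκ] using (hasDerivAt_timeIntegral _ (contDiff_lap hα').continuous p).fun_neg
    · simp [lap_timeIntegral hα0 hα', hinitκ]
  · refine congrFun (pt_eq_of_wave ((contDiff_pt (hA i j)).differentiable (by simp))
      (waveA i j) (fun p => ?_) fun x => ?_)
    · rw [← rhsA_rhs_eq_lap (hA i j) hβ hκ]
      exact hasDerivAt_rhsA_timeIntegral hγ0 hΓ0 hφ0 hα0 hγ' hΓ' hφ' hα' i j p
    · exact (hinitA i j x).trans
        (rhsA_timeIntegral_apply_zero hγ0 hΓ0 hφ0 hα0 hγ' hΓ' hφ' hα' i j x).symm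

/-- Given `β`, and `A`, `κ` solving the wave equations with initial time-derivatives
matching (E5), (E3) at `t = 0`, the fields `φ, α, γ̃, Γ` defined by time integration
satisfy the full linearized BSSN system (E1)–(E6). -/
theorem integrated_solution_satisfies_BSSN
    (β : Fin 3 → Spc → ℝ) (A : Fin 3 → Fin 3 → Spc → ℝ) (κ : Spc → ℝ)
    (hβ : ∀ i, ContDiff ℝ (⊤ : ℕ∞) (β i)) (hA : ∀ i j, ContDiff ℝ (⊤ : ℕ∞) (A i j))
    (hκ : ContDiff ℝ (⊤ : ℕ∞) κ)
    (hAsym : ∀ i j, A i j = A j i)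
    (waveA : ∀ i j p, pt (pt (A i j)) p = lap (A i j) p)
    (waveκ : ∀ p, pt (pt κ) p = lap κ p)
    (γ0 : Fin 3 → Fin 3 → (Fin 3 → ℝ) → ℝ) (Γ0 : Fin 3 → (Fin 3 → ℝ) → ℝ)
    (α0 φ0 : (Fin 3 → ℝ) → ℝ)
    (hγ0 : ∀ i j, ContDiff ℝ (⊤ : ℕ∞) (γ0 i j)) (hΓ0 : ∀ i, ContDiff ℝ (⊤ : ℕ∞) (Γ0 i))
    (hα0 : ContDiff ℝ (⊤ : ℕ∞) α0) (hφ0 : ContDiff ℝ (⊤ : ℕ∞) φ0)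
    (hγ0sym : ∀ i j, γ0 i j = γ0 j i)
    (hinitA : ∀ i j, ∀ x : Fin 3 → ℝ, pt (A i j) (0, x) =
      -(1/2) * lapS (γ0 i j) x + (1/2) * (d i (Γ0 j) x + d j (Γ0 i) x)
        - 2 * d i (d j φ0) x - 2 * kron i j * lapS φ0 x
        - d i (d j α0) x + (1/3) * kron i j * lapS α0 x)
    (hinitκ : ∀ x : Fin 3 → ℝ, pt κ (0, x) = -(lapS α0 x))
    (φ α : Spc → ℝ) (γ : Fin 3 → Fin 3 → Spc → ℝ) (Γ : Fin 3 → Spc → ℝ)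
    (hφ : ∀ t : ℝ, ∀ x : Fin 3 → ℝ, φ (t, x) = φ0 x +
      ∫ s in (0:ℝ)..t, (-(1/6) * κ (s, x) + (1/6) * ∑ i, ps i (β i) (s, x)))
    (hα : ∀ t : ℝ, ∀ x : Fin 3 → ℝ, α (t, x) = α0 x - ∫ s in (0:ℝ)..t, κ (s, x))
    (hγ : ∀ i j, ∀ t : ℝ, ∀ x : Fin 3 → ℝ, γ i j (t, x) = γ0 i j x +
      ∫ s in (0:ℝ)..t, (-2 * A i j (s, x) + ps i (β j) (s, x) + ps j (β i) (s, x)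
        - (2/3) * kron i j * ∑ a, ps a (β a) (s, x)))
    (hΓ : ∀ i, ∀ t : ℝ, ∀ x : Fin 3 → ℝ, Γ i (t, x) = Γ0 i x +
      ∫ s in (0:ℝ)..t, (-(4/3) * ps i κ (s, x)
        + (1/3) * ps i (fun q => ∑ a, ps a (β a) q) (s, x) + lap (β i) (s, x))) :
    (∀ p, pt φ p = -(1/6) * κ p + (1/6) * ∑ l, ps l (β l) p) ∧
    (∀ p, pt α p = -κ p) ∧
    (∀ p, pt κ p = -(lap α p)) ∧
    (∀ i j p, pt (γ i j) p =
      -2 * A i j p + ps i (β j) p + ps j (β i) p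
        - (2/3) * kron i j * ∑ l, ps l (β l) p) ∧
    (∀ i j p, pt (A i j) p =
      -(1/2) * lap (γ i j) p + (1/2) * (ps i (Γ j) p + ps j (Γ i) p)
        - 2 * ps i (ps j φ) p - 2 * kron i j * lap φ p
        - ps i (ps j α) p + (1/3) * kron i j * lap α p) ∧
    (∀ i p, pt (Γ i) p =
      -(4/3) * ps i κ p + (1/3) * ps i (fun q => ∑ l, ps l (β l) q) p
        + lap (β i) p) :=
  integrated_solution_satisfies_BSSN_general β A κ hβ hA hκ waveA waveκ γ0 Γ0 α0 φ0 hγ0 hΓ0 hα0 hφ0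
    hinitA hinitκ φ α γ Γ hφ hα hγ hΓ
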